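/- arXiv:2106.10345 — 6 statements merged into one kernel-verified Lean document; each statement's English description precedes it below -/
import Mathlib

section
/- Let F : ℝⁿ → ℝⁿ, let φ : ℝ → ℝⁿ → ℝⁿ satisfy φ(0, x) = x and φ(s + t, x) = φ(s, φ(t, x)) for all s, t ∈ ℝ, and suppose that for every y the curve t ↦ φ(t, y) is differentiable with derivative F(φ(t, y)). Let h : ℝⁿ → ℝ, fix x ∈ ℝⁿ, and suppose t₀ > 0 maximizes t ↦ h(φ(t, x)) over [0, ∞) and that y ↦ h(φ(t₀, y)) is differentiable at x. Then the derivative of y ↦ h(φ(t₀, y)) at x applied to the direction F(x) is zero. -/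
/-- If `t₀ > 0` maximizes `t ↦ h(φ(t, x))` over `[0, ∞)` for a flow `φ`
of the vector field `F`, then the spatial derivative of `y ↦ h(φ(t₀, y))` at `x`
in the direction `F(x)` vanishes. -/
theorem stmt_2 (n : ℕ) (F : (Fin n → ℝ) → (Fin n → ℝ))
    (φ : ℝ → (Fin n → ℝ) → (Fin n → ℝ))
    (hφ0 : ∀ x, φ 0 x = x)
    (hφadd : ∀ s t : ℝ, ∀ x, φ (s + t) x = φ s (φ t x))
    (hφd : ∀ y, ∀ t : ℝ, HasDerivAt (fun τ => φ τ y) (F (φ t y)) t)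
    (h : (Fin n → ℝ) → ℝ) (x : Fin n → ℝ) (t₀ : ℝ) (ht₀ : 0 < t₀)
    (hmax : ∀ t : ℝ, 0 ≤ t → h (φ t x) ≤ h (φ t₀ x))
    (hdiff : DifferentiableAt ℝ (fun y => h (φ t₀ y)) x) :
    fderiv ℝ (fun y => h (φ t₀ y)) x (F x) = 0 := by
  -- g t = h (φ t₀ (φ t x)) has a local max at 0 and derivative equal to the goal.
  have hd : HasDerivAt (fun t => h (φ t₀ (φ t x)))
      (fderiv ℝ (fun y => h (φ t₀ y)) x (F x)) 0 := by
    have hd2 : HasDerivAt (fun τ => φ τ x) (F x) 0 := by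
      simpa [hφ0] using hφd x 0
    have hf : HasFDerivAt (fun y => h (φ t₀ y)) (fderiv ℝ (fun y => h (φ t₀ y)) x) (φ 0 x) := by
      rw [hφ0]; exact hdiff.hasFDerivAt
    have := hf.comp_hasDerivAt 0 hd2; exact this
  have hmaxloc : IsLocalMax (fun t => h (φ t₀ (φ t x))) 0 := by
    have : ∀ t ∈ Metric.ball (0 : ℝ) t₀, h (φ t₀ (φ t x)) ≤ h (φ t₀ (φ 0 x)) := by
      intro t ht
      rw [← hφadd, ← hφadd]
      simp only [add_zero]
      apply hmax
      have : |t| < t₀ := by simpa [Real.dist_eq] using ht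
      linarith [abs_lt.mp this |>.1]
    filter_upwards [Metric.ball_mem_nhds (0:ℝ) ht₀] using this
  exact hmaxloc.hasDerivAt_eq_zero hd
end

section
/- Consider ẋ = f(x) + g(x)u with f : ℝⁿ → ℝⁿ, g : ℝⁿ → ℝⁿˣᵐ, a compact control set U ⊆ ℝᵐ, and a feedback law u* : ℝⁿ → ℝᵐ with u*(y) ∈ U for all y. Let φ : ℝ → ℝⁿ → ℝⁿ satisfy φ(0, x) = x, φ(s + t, x) = φ(s, φ(t, x)) for all s, t ≥ 0, and for every y the curve t ↦ φ(t, y) is differentiable at t = 0 from the right with derivative f(y) + g(y)u*(y). Assume for every y on the forward orbit of x the set {h(φ(t, y)) : t ≥ 0} is bounded above, define H(y) = sup_{t ≥ 0} h(φ(t, y)), and assume H is differentiable at x. Then DH(x)[f(x) + g(x)u*(x)] ≤ 0; consequently, for every strictly increasing α : ℝ → ℝ with α(0) = 0 and every x with H(x) ≤ 0, there exists u ∈ U such that DH(x)[f(x) + g(x)u] ≤ α(−H(x)). -/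
/-- Theorem 1: For the control-affine system `ẋ = f(x) + g(x)u` with
compact input set `U` and feedback `u*` valued in `U`, the function
`H(y) = sup_{t ≥ 0} h(φ(t, y))` along the closed-loop semiflow `φ` satisfies
`DH(x)[f(x) + g(x)u*(x)] ≤ 0`; consequently, for every extended class-K function `α`,
if `H(x) ≤ 0` then there exists `u ∈ U` with `DH(x)[f(x) + g(x)u] ≤ α(−H(x))`. -/
theorem stmt_3 (n m : ℕ)
    (f : (Fin n → ℝ) → (Fin n → ℝ))
    (g : (Fin n → ℝ) → Matrix (Fin n) (Fin m) ℝ)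
    (U : Set (Fin m → ℝ)) (hU : IsCompact U)
    (ustar : (Fin n → ℝ) → (Fin m → ℝ)) (hustar : ∀ y, ustar y ∈ U)
    (φ : ℝ → (Fin n → ℝ) → (Fin n → ℝ))
    (hφ0 : ∀ y, φ 0 y = y)
    (hφadd : ∀ s t : ℝ, 0 ≤ s → 0 ≤ t → ∀ y, φ (s + t) y = φ s (φ t y))
    (hφd : ∀ y, HasDerivWithinAt (fun τ => φ τ y)
      (f y + (g y).mulVec (ustar y)) (Set.Ici (0 : ℝ)) 0)
    (h : (Fin n → ℝ) → ℝ) (x : Fin n → ℝ)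
    (hbdd : ∀ y, (∃ t : ℝ, 0 ≤ t ∧ y = φ t x) →
      BddAbove {z : ℝ | ∃ t : ℝ, 0 ≤ t ∧ z = h (φ t y)})
    (H : (Fin n → ℝ) → ℝ)
    (hH : ∀ y, H y = sSup {z : ℝ | ∃ t : ℝ, 0 ≤ t ∧ z = h (φ t y)})
    (hHdiff : DifferentiableAt ℝ H x) :
    fderiv ℝ H x (f x + (g x).mulVec (ustar x)) ≤ 0 ∧
    ∀ α : ℝ → ℝ, StrictMono α → α 0 = 0 → H x ≤ 0 →
      ∃ u ∈ U, fderiv ℝ H x (f x + (g x).mulVec u) ≤ α (-H x) := by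
  have hbx : BddAbove {z : ℝ | ∃ t : ℝ, 0 ≤ t ∧ z = h (φ t x)} :=
    hbdd x ⟨0, le_refl 0, (hφ0 x).symm⟩
  -- H (φ t x) ≤ H x for t ≥ 0
  have key : ∀ t : ℝ, 0 ≤ t → H (φ t x) ≤ H x := by
    intro t ht
    rw [hH, hH]
    apply csSup_le_csSup hbx
    · exact ⟨h (φ 0 (φ t x)), 0, le_refl 0, rfl⟩
    · rintro z ⟨s, hs, rfl⟩
      exact ⟨s + t, by linarith, by rw [hφadd s t hs ht x]⟩
  set v := f x + (g x).mulVec (ustar x) with hv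
  have hcomp : HasDerivWithinAt (fun τ => H (φ τ x)) (fderiv ℝ H x v)
      (Set.Ici (0 : ℝ)) 0 := by
    have hHd : HasFDerivAt H (fderiv ℝ H x) (φ 0 x) := by
      rw [hφ0 x]; exact hHdiff.hasFDerivAt
    exact hHd.comp_hasDerivWithinAt 0 (hφd x)
  have hD : fderiv ℝ H x v ≤ 0 := by
    have hslope := hasDerivWithinAt_iff_tendsto_slope.mp hcomp
    have hset : Set.Ici (0 : ℝ) \ {0} = Set.Ioi (0 : ℝ) := by
      ext t; simp [Set.mem_diff, lt_iff_le_and_ne, eq_comm, and_comm]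
    rw [hset] at hslope
    refine le_of_tendsto hslope ?_
    filter_upwards [self_mem_nhdsWithin] with t ht
    have ht' : (0 : ℝ) < t := ht
    have : H (φ t x) - H (φ 0 x) ≤ 0 := by
      have := key t ht'.le
      rw [hφ0 x]
      linarith
    simp only [slope_def_field, div_eq_mul_inv]
    have : (H (φ t x) - H (φ 0 x)) / (t - 0) ≤ 0 :=
      div_nonpos_of_nonpos_of_nonneg this (by linarith)
    simpa [slope, div_eq_mul_inv] using this
  refine ⟨hD, fun α hα hα0 hHx => ⟨ustar x, hustar x, ?_⟩⟩
  have : (0 : ℝ) ≤ α (-H x) := by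
    rw [← hα0]; exact hα.monotone (by linarith)
  linarith
end

section
/- Let r ≥ 1 be an integer, a > 0, and let y : ℝ → ℝ be r-times continuously differentiable with y^{(r)}(t) ≤ −a for all t ≥ 0. If sup_{s ≥ 0} [Σ_{i=0}^{r−1} y^{(i)}(0) sⁱ/i! − a sʳ/r!] ≤ 0, then y(t) ≤ 0 for all t ≥ 0. -/
open Finset Set Polynomial Filter

lemma aux_iterDW {N : ℕ} {f : ℝ → ℝ} (hf : ContDiff ℝ N f) {n : ℕ} (hn : n ≤ N)
    {s : Set ℝ} (hs : UniqueDiffOn ℝ s) {x : ℝ} (hx : x ∈ s) :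
    iteratedDerivWithin n f s x = iteratedDeriv n f x := by
  have hcd : ContDiffOn ℝ N f Set.univ := hf.contDiffOn
  have h := (hcd.ftaylorSeriesWithin uniqueDiffOn_univ).mono (Set.subset_univ s)
  have h2 := h.eq_iteratedFDerivWithin_of_uniqueDiffOn (by exact_mod_cast hn) hs hx
  have h3 : ftaylorSeriesWithin ℝ f Set.univ x n = iteratedFDeriv ℝ n f x := by
    simp [ftaylorSeriesWithin, iteratedFDerivWithin_univ]
  rw [iteratedDerivWithin_eq_iteratedFDerivWithin, iteratedDeriv_eq_iteratedFDeriv, ← h2, h3]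

open Finset in
/-- safety guarantee of Theorem 2: If `y` is `r`-times continuously
differentiable with `y⁽ʳ⁾(t) ≤ −a` for all `t ≥ 0`, and
`sup_{s ≥ 0} [Σ_{i=0}^{r−1} y⁽ⁱ⁾(0) sⁱ/i! − a sʳ/r!] ≤ 0`,
then `y(t) ≤ 0` for all `t ≥ 0`. -/
theorem stmt_9 (r : ℕ) (hr : 1 ≤ r) (a : ℝ) (ha : 0 < a) (y : ℝ → ℝ)
    (hy : ContDiff ℝ r y)
    (hyr : ∀ t : ℝ, 0 ≤ t → iteratedDeriv r y t ≤ -a)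
    (h0 : sSup {z : ℝ | ∃ s : ℝ, 0 ≤ s ∧
        z = (∑ i ∈ range r, iteratedDeriv i y 0 * s ^ i / (Nat.factorial i : ℝ))
          - a * s ^ r / (Nat.factorial r : ℝ)} ≤ 0) :
    ∀ t : ℝ, 0 ≤ t → y t ≤ 0 := by
  set P : ℝ → ℝ := fun s =>
    (∑ i ∈ range r, iteratedDeriv i y 0 * s ^ i / (Nat.factorial i : ℝ))
      - a * s ^ r / (Nat.factorial r : ℝ) with hP
  set S : Set ℝ := {z : ℝ | ∃ s : ℝ, 0 ≤ s ∧
        z = (∑ i ∈ range r, iteratedDeriv i y 0 * s ^ i / (Nat.factorial i : ℝ))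
          - a * s ^ r / (Nat.factorial r : ℝ)} with hS
  have hSP : ∀ s : ℝ, 0 ≤ s → P s ∈ S := fun s hs => ⟨s, hs, rfl⟩
  -- continuity of P
  have hPcont : Continuous P := by
    apply Continuous.sub
    · exact continuous_finset_sum _ fun i _ => by continuity
    · continuity
  -- P tends to -∞ via polynomial machinery
  have hfacpos : (0 : ℝ) < (Nat.factorial r : ℝ) := by positivity
  set p : ℝ[X] := (∑ i ∈ range r, C (iteratedDeriv i y 0 / (Nat.factorial i : ℝ)) * X ^ i)
      - C (a / (Nat.factorial r : ℝ)) * X ^ r with hp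
  have hpev : ∀ s : ℝ, p.eval s = P s := by
    intro s
    simp only [hp, hP, eval_sub, eval_finset_sum, eval_mul, eval_C, eval_pow, eval_X]
    congr 1
    · exact Finset.sum_congr rfl fun i _ => by ring
    · ring
  have hcoeff : p.coeff r = -(a / (Nat.factorial r : ℝ)) := by
    simp only [hp, coeff_sub, finset_sum_coeff, coeff_C_mul, coeff_X_pow]
    rw [Finset.sum_eq_zero (fun i hi => by
      rw [Finset.mem_range] at hi; simp [hi.ne'])]
    simp
  have hcne : p.coeff r ≠ 0 := by
    rw [hcoeff]
    have : a / (Nat.factorial r : ℝ) > 0 := by positivity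
    linarith
  have hdegle : p.natDegree ≤ r := by
    apply le_trans (natDegree_sub_le _ _)
    apply max_le
    · exact natDegree_sum_le_of_forall_le _ _ fun i hi =>
        le_trans (natDegree_C_mul_X_pow_le _ _) (le_of_lt (Finset.mem_range.mp hi))
    · exact natDegree_C_mul_X_pow_le _ _
  have hdeg : p.natDegree = r := le_antisymm hdegle (le_natDegree_of_ne_zero hcne)
  have hpne : p ≠ 0 := fun h => hcne (by simp [h])
  have hdegpos : 0 < p.degree := by
    rw [degree_eq_natDegree hpne, hdeg]
    exact_mod_cast hr
  have hlead : p.leadingCoeff ≤ 0 := by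
    rw [leadingCoeff, hdeg, hcoeff]
    have : a / (Nat.factorial r : ℝ) > 0 := by positivity
    linarith
  have htendsto : Tendsto P atTop atBot := by
    have := p.tendsto_atBot_of_leadingCoeff_nonpos hdegpos hlead
    exact this.congr hpev
  -- Bounded above
  have hbdd : BddAbove S := by
    obtain ⟨M, hM⟩ := (htendsto.eventually (eventually_le_atBot (P 0))).exists_forall_of_atTop
    set M' : ℝ := max M 0 with hM'
    obtain ⟨x0, _, hx0⟩ := (isCompact_Icc (a := (0:ℝ)) (b := M')).exists_isMaxOn
      ⟨0, le_refl 0, le_max_right _ _⟩ hPcont.continuousOn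
    refine ⟨max (P x0) (P 0), ?_⟩
    rintro z ⟨s, hs, rfl⟩
    rcases le_or_gt s M' with h | h
    · exact le_max_of_le_left (hx0 ⟨hs, h⟩)
    · exact le_max_of_le_right (hM s (le_trans (le_max_left _ _) h.le))
  -- main argument
  intro t ht
  have key : y t ≤ P t := by
    rcases eq_or_lt_of_le ht with h | h
    · -- t = 0
      subst h
      have h1 : (∑ i ∈ range r, iteratedDeriv i y 0 * (0:ℝ) ^ i / (Nat.factorial i : ℝ)) = y 0 := by
        rw [Finset.sum_eq_single 0]
        · simp
        · intro i _ hi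
          simp [zero_pow hi]
        · intro h; exact absurd (Finset.mem_range.mpr (by omega)) h
      have hP0 : P 0 = y 0 := by
        show (∑ i ∈ range r, iteratedDeriv i y 0 * (0:ℝ) ^ i / (Nat.factorial i : ℝ))
          - a * (0:ℝ) ^ r / (Nat.factorial r : ℝ) = y 0
        rw [h1, zero_pow (by omega : r ≠ 0)]
        ring
      exact hP0.ge
    · -- t > 0
      obtain ⟨n, rfl⟩ : ∃ n, r = n + 1 := ⟨r - 1, (Nat.succ_pred_eq_of_pos hr).symm⟩
      have hud : UniqueDiffOn ℝ (Icc (0:ℝ) t) := uniqueDiffOn_Icc h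
      have hf : ContDiffOn ℝ n y (Icc 0 t) :=
        (hy.of_le (by exact_mod_cast Nat.le_succ n)).contDiffOn
      have hdiffn : Differentiable ℝ (iteratedDeriv n y) :=
        hy.differentiable_iteratedDeriv n (by exact_mod_cast Nat.lt_succ_self n)
      have hf' : DifferentiableOn ℝ (iteratedDerivWithin n y (Icc 0 t)) (Ioo 0 t) := by
        apply (hdiffn.differentiableOn).congr
        intro x hx
        exact aux_iterDW hy (Nat.le_succ n) hud (Ioo_subset_Icc_self hx)
      obtain ⟨x', hx', hEq⟩ : ∃ x' ∈ Ioo 0 t, y t - taylorWithinEval y n (Icc 0 t) 0 t =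
          iteratedDerivWithin (n + 1) y (Icc 0 t) x' * (t - 0) ^ (n + 1) / (Nat.factorial (n + 1) : ℝ) := by
        have := taylor_mean_remainder_lagrange (f := y) (x₀ := 0) (x := t) (n := n) h.ne
          (by rwa [Set.uIcc_of_le h.le]) (by rwa [Set.uIcc_of_le h.le, Set.uIoo_of_le h.le])
        rwa [Set.uIcc_of_le h.le, Set.uIoo_of_le h.le] at this
      have hiter : iteratedDerivWithin (n + 1) y (Icc 0 t) x' = iteratedDeriv (n + 1) y x' :=
        aux_iterDW hy le_rfl hud (Ioo_subset_Icc_self hx')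
      have htay : taylorWithinEval y n (Icc 0 t) 0 t =
          ∑ i ∈ range (n + 1), iteratedDeriv i y 0 * t ^ i / (Nat.factorial i : ℝ) := by
        rw [taylor_within_apply]
        apply Finset.sum_congr rfl
        intro i hi
        have : iteratedDerivWithin i y (Icc 0 t) 0 = iteratedDeriv i y 0 :=
          aux_iterDW hy (Finset.mem_range.mp hi).le hud ⟨le_refl 0, h.le⟩
        rw [this, smul_eq_mul]
        ring
      have hbound : iteratedDeriv (n + 1) y x' ≤ -a := hyr x' hx'.1.le
      have htr : (0:ℝ) < t ^ (n + 1) / (Nat.factorial (n + 1) : ℝ) := by positivity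
      have : y t - taylorWithinEval y n (Icc 0 t) 0 t ≤ -a * t ^ (n + 1) / (Nat.factorial (n + 1) : ℝ) := by
        rw [hEq, hiter]
        have h1 : iteratedDeriv (n + 1) y x' * (t - 0) ^ (n + 1) / (Nat.factorial (n+1) : ℝ)
            = iteratedDeriv (n + 1) y x' * (t ^ (n + 1) / (Nat.factorial (n+1) : ℝ)) := by
          ring
        have h2 : -a * t ^ (n + 1) / (Nat.factorial (n+1) : ℝ)
            = -a * (t ^ (n + 1) / (Nat.factorial (n+1) : ℝ)) := by ring
        rw [h1, h2]
        exact mul_le_mul_of_nonneg_right hbound htr.le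
      rw [htay] at this
      have hPt : P t = (∑ i ∈ range (n+1), iteratedDeriv i y 0 * t ^ i / (Nat.factorial i : ℝ))
          - a * t ^ (n+1) / (Nat.factorial (n+1) : ℝ) := rfl
      have h2 : -a * t ^ (n + 1) / (Nat.factorial (n+1) : ℝ)
          = -(a * t ^ (n + 1) / (Nat.factorial (n+1) : ℝ)) := by ring
      rw [hPt]
      linarith [this]
  have h1 : P t ≤ sSup S := le_csSup hbdd (hSP t ht)
  have h2 : P t ≤ 0 := le_trans h1 h0
  linarith
end

section
/- Let r ≥ 1 be an integer, a > 0, and let y : ℝ → ℝ be r-times continuously differentiable with y^{(r)}(t) ≤ −a for all t ≥ 0. Then the function t ↦ sup_{s ≥ 0} [Σ_{i=0}^{r−1} y^{(i)}(t) sⁱ/i! − a sʳ/r!] is nonincreasing on [0, ∞). -/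
open Finset

-- key derivative lemma
lemma stmt10_hasDerivAt (r : ℕ) (hr : 1 ≤ r) (a : ℝ) (y : ℝ → ℝ)
    (hy : ContDiff ℝ r y) (c : ℝ) (u : ℝ) :
    HasDerivAt (fun u : ℝ =>
      (∑ i ∈ range r, iteratedDeriv i y u * (c - u) ^ i / (Nat.factorial i : ℝ))
        - a * (c - u) ^ r / (Nat.factorial r : ℝ))
      ((iteratedDeriv r y u + a) * (c - u) ^ (r - 1) / (Nat.factorial (r - 1) : ℝ)) u := by
  have hv : HasDerivAt (fun u : ℝ => c - u) (-1) u := by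
    simpa using (hasDerivAt_id u).const_sub c
  have hterm : ∀ i ∈ range r, HasDerivAt
      (fun u : ℝ => iteratedDeriv i y u * (c - u) ^ i / (Nat.factorial i : ℝ))
      ((iteratedDeriv (i + 1) y u * (c - u) ^ i
        + iteratedDeriv i y u * ((i : ℝ) * (c - u) ^ (i - 1) * (-1))) / (Nat.factorial i : ℝ)) u := by
    intro i hi
    have hdi : Differentiable ℝ (iteratedDeriv i y) :=
      hy.differentiable_iteratedDeriv i (by exact_mod_cast mem_range.mp hi)
    have h1 : HasDerivAt (iteratedDeriv i y) (iteratedDeriv (i + 1) y u) u := by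
      rw [iteratedDeriv_succ]
      exact (hdi u).hasDerivAt
    exact (h1.mul (hv.pow i)).div_const _
  have hsum := HasDerivAt.fun_sum hterm
  have hneg : HasDerivAt (fun u : ℝ => a * (c - u) ^ r / (Nat.factorial r : ℝ))
      (a * ((r : ℝ) * (c - u) ^ (r - 1) * (-1)) / (Nat.factorial r : ℝ)) u :=
    ((hv.pow r).const_mul a).div_const _
  have := hsum.sub hneg
  convert this using 1
  · rfl
  · rfl
  · rfl
  -- telescoping
  have htel : ∑ i ∈ range r,
      ((iteratedDeriv (i + 1) y u * (c - u) ^ i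
        + iteratedDeriv i y u * ((i : ℝ) * (c - u) ^ (i - 1) * (-1))) / (Nat.factorial i : ℝ))
      = iteratedDeriv r y u * ((r : ℝ) * (c - u) ^ (r - 1)) / (Nat.factorial r : ℝ) := by
    have := Finset.sum_range_sub
      (fun i => iteratedDeriv i y u * ((i : ℝ) * (c - u) ^ (i - 1)) / (Nat.factorial i : ℝ)) r
    simp only [Nat.cast_zero, zero_mul, zero_div, mul_zero, sub_zero] at this
    rw [← this]
    apply Finset.sum_congr rfl
    intro i _
    have hfac : (Nat.factorial (i + 1) : ℝ) = (i + 1) * Nat.factorial i := by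
      push_cast [Nat.factorial_succ]; ring
    have hfi : (Nat.factorial i : ℝ) ≠ 0 := by positivity
    have hfi1 : (Nat.factorial (i + 1) : ℝ) ≠ 0 := by positivity
    simp only [Nat.add_sub_cancel]
    rw [hfac]
    field_simp
    push_cast; ring
  rw [htel]
  have hfac : (Nat.factorial r : ℝ) = r * Nat.factorial (r - 1) := by
    exact_mod_cast (Nat.mul_factorial_pred (by omega)).symm
  have hr0 : (r : ℝ) ≠ 0 := by positivity
  have hfi : (Nat.factorial (r - 1) : ℝ) ≠ 0 := by positivity
  field_simp [hfac]
  rw [hfac]; ring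

noncomputable def stmt10F (r : ℕ) (a : ℝ) (y : ℝ → ℝ) (t s : ℝ) : ℝ :=
  (∑ i ∈ range r, iteratedDeriv i y t * s ^ i / (Nat.factorial i : ℝ))
    - a * s ^ r / (Nat.factorial r : ℝ)

lemma stmt10_key (r : ℕ) (hr : 1 ≤ r) (a : ℝ) (y : ℝ → ℝ)
    (hy : ContDiff ℝ r y) (hyr : ∀ t : ℝ, 0 ≤ t → iteratedDeriv r y t ≤ -a)
    (t1 t2 s : ℝ) (ht1 : 0 ≤ t1) (h12 : t1 ≤ t2) (hs : 0 ≤ s) :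
    stmt10F r a y t2 s ≤ stmt10F r a y t1 (s + t2 - t1) := by
  have hφ : ∀ u : ℝ, HasDerivAt (fun u => stmt10F r a y u (s + t2 - u))
      ((iteratedDeriv r y u + a) * (s + t2 - u) ^ (r - 1) / (Nat.factorial (r - 1) : ℝ)) u :=
    fun u => stmt10_hasDerivAt r hr a y hy (s + t2) u
  have hanti : AntitoneOn (fun u => stmt10F r a y u (s + t2 - u)) (Set.Icc t1 t2) := by
    apply antitoneOn_of_deriv_nonpos (convex_Icc _ _)
    · exact (continuous_iff_continuousAt.mpr fun u => (hφ u).continuousAt).continuousOn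
    · intro x _
      exact (hφ x).differentiableAt.differentiableWithinAt
    · intro x hx
      rw [interior_Icc] at hx
      rw [(hφ x).deriv]
      have hx0 : 0 ≤ x := le_trans ht1 hx.1.le
      have h1 : iteratedDeriv r y x + a ≤ 0 := by
        have := hyr x hx0; linarith
      have h2 : (0:ℝ) ≤ (s + t2 - x) ^ (r - 1) := by
        have : (0:ℝ) ≤ s + t2 - x := by linarith [hx.2]
        positivity
      apply div_nonpos_of_nonpos_of_nonneg _ (by positivity)
      exact mul_nonpos_iff.mpr (Or.inr ⟨h1, h2⟩)
  have h := hanti ⟨le_rfl, h12⟩ ⟨h12, le_rfl⟩ h12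
  simp only at h
  rwa [show s + t2 - t2 = s by ring] at h

lemma stmt10_bdd (r : ℕ) (hr : 1 ≤ r) (a : ℝ) (ha : 0 < a) (y : ℝ → ℝ) (t : ℝ) :
    BddAbove {z : ℝ | ∃ s : ℝ, 0 ≤ s ∧ z = stmt10F r a y t s} := by
  set D : ℝ := ∑ i ∈ range r, |iteratedDeriv i y t| / (Nat.factorial i : ℝ) with hD
  have hD0 : 0 ≤ D := Finset.sum_nonneg fun i _ => by positivity
  set K : ℝ := max 1 ((Nat.factorial r : ℝ) * D / a) with hK
  have hK1 : (1:ℝ) ≤ K := le_max_left _ _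
  have hcont : Continuous (fun s => stmt10F r a y t s) := by
    unfold stmt10F
    exact (continuous_finset_sum _ fun i _ =>
      ((continuous_const.mul (continuous_pow i)).div_const _)).sub
      ((continuous_const.mul (continuous_pow r)).div_const _)
  obtain ⟨M, hM⟩ : BddAbove ((fun s => stmt10F r a y t s) '' Set.Icc 0 K) :=
    (isCompact_Icc.image hcont).bddAbove
  refine ⟨max M 0, ?_⟩
  rintro z ⟨s, hs, rfl⟩
  rcases le_or_gt s K with h | h
  · exact le_trans (hM ⟨s, ⟨hs, h⟩, rfl⟩) (le_max_left _ _)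
  · -- s ≥ K : F t s ≤ 0
    have hs1 : (1:ℝ) ≤ s := le_trans hK1 h.le
    have hsK : (Nat.factorial r : ℝ) * D / a ≤ s := le_trans (le_max_right _ _) h.le
    have hstep : stmt10F r a y t s ≤ D * s ^ (r - 1) - a * s ^ r / (Nat.factorial r : ℝ) := by
      unfold stmt10F
      refine sub_le_sub_right ?_ _
      rw [hD, Finset.sum_mul]
      refine Finset.sum_le_sum fun i hi => ?_
      have hi' : i ≤ r - 1 := Nat.le_sub_one_of_lt (mem_range.mp hi)
      have hpow : s ^ i ≤ s ^ (r - 1) := pow_le_pow_right₀ hs1 hi'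
      have h1 : iteratedDeriv i y t * s ^ i ≤ |iteratedDeriv i y t| * s ^ (r - 1) := by
        calc iteratedDeriv i y t * s ^ i ≤ |iteratedDeriv i y t| * s ^ i := by
              apply mul_le_mul_of_nonneg_right (le_abs_self _) (by positivity)
          _ ≤ |iteratedDeriv i y t| * s ^ (r - 1) :=
              mul_le_mul_of_nonneg_left hpow (abs_nonneg _)
      calc iteratedDeriv i y t * s ^ i / (Nat.factorial i : ℝ)
          ≤ |iteratedDeriv i y t| * s ^ (r - 1) / (Nat.factorial i : ℝ) := by
            apply div_le_div_of_nonneg_right h1 (by positivity) |>.trans_eq rfl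
        _ = |iteratedDeriv i y t| / (Nat.factorial i : ℝ) * s ^ (r - 1) := by ring
    have hfin : D * s ^ (r - 1) - a * s ^ r / (Nat.factorial r : ℝ) ≤ 0 := by
      have hsr : s ^ r = s ^ (r - 1) * s := by
        conv_lhs => rw [show r = (r - 1) + 1 from (Nat.succ_pred_eq_of_pos hr).symm]
        rw [pow_succ]
      have hfr : (0:ℝ) < (Nat.factorial r : ℝ) := by positivity
      have hDa : D ≤ a * s / (Nat.factorial r : ℝ) := by
        rw [le_div_iff₀ hfr]
        calc D * (Nat.factorial r : ℝ) = (Nat.factorial r : ℝ) * D := by ring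
          _ ≤ a * s := by
            rw [div_le_iff₀ ha] at hsK; linarith
      have hsp : (0:ℝ) ≤ s ^ (r - 1) := by positivity
      have h1 := mul_le_mul_of_nonneg_right hDa hsp
      have h2 : a * s / (Nat.factorial r : ℝ) * s ^ (r-1)
          = a * (s ^ (r-1) * s) / (Nat.factorial r : ℝ) := by ring
      rw [hsr]
      linarith
    exact le_trans hstep (hfin.trans (le_max_right _ _))

open Finset in
/-- forward-invariance content of Theorem 2: If `y` is `r`-times
continuously differentiable with `y⁽ʳ⁾(t) ≤ −a` for all `t ≥ 0`, then
`t ↦ sup_{s ≥ 0} [Σ_{i=0}^{r−1} y⁽ⁱ⁾(t) sⁱ/i! − a sʳ/r!]` is nonincreasing on `[0, ∞)`. -/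
theorem stmt_10 (r : ℕ) (hr : 1 ≤ r) (a : ℝ) (ha : 0 < a) (y : ℝ → ℝ)
    (hy : ContDiff ℝ r y)
    (hyr : ∀ t : ℝ, 0 ≤ t → iteratedDeriv r y t ≤ -a) :
    AntitoneOn (fun t : ℝ => sSup {z : ℝ | ∃ s : ℝ, 0 ≤ s ∧
        z = (∑ i ∈ range r, iteratedDeriv i y t * s ^ i / (Nat.factorial i : ℝ))
          - a * s ^ r / (Nat.factorial r : ℝ)}) (Set.Ici (0 : ℝ)) := by
  have hset : ∀ t : ℝ, {z : ℝ | ∃ s : ℝ, 0 ≤ s ∧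
      z = (∑ i ∈ range r, iteratedDeriv i y t * s ^ i / (Nat.factorial i : ℝ))
        - a * s ^ r / (Nat.factorial r : ℝ)}
      = {z : ℝ | ∃ s : ℝ, 0 ≤ s ∧ z = stmt10F r a y t s} := fun t => rfl
  intro t1 ht1 t2 ht2 h12
  simp only [hset]
  refine csSup_le ⟨stmt10F r a y t2 0, ⟨0, le_refl 0, rfl⟩⟩ ?_
  rintro z ⟨s, hs, rfl⟩
  have h1 : stmt10F r a y t2 s ≤ stmt10F r a y t1 (s + t2 - t1) :=
    stmt10_key r hr a y hy hyr t1 t2 s ht1 h12 hs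
  have h2 : stmt10F r a y t1 (s + t2 - t1) ≤
      sSup {z : ℝ | ∃ s : ℝ, 0 ≤ s ∧ z = stmt10F r a y t1 s} :=
    le_csSup (stmt10_bdd r hr a ha y t1) ⟨s + t2 - t1, by linarith [Set.mem_Ici.mp ht2], rfl⟩
  linarith
end

section
/- Let a > 0 and let y : ℝ → ℝ be twice continuously differentiable with y''(t) ≤ −a for all t ≥ 0. If y(0) + (max(y'(0), 0))²/(2a) ≤ 0, then y(t) ≤ 0 for all t ≥ 0. -/
lemma comp_le_aux (f g f' g' : ℝ → ℝ)
    (hf : ∀ t, HasDerivAt f (f' t) t) (hg : ∀ t, HasDerivAt g (g' t) t)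
    (h0 : f 0 ≤ g 0) (hle : ∀ t, 0 ≤ t → f' t ≤ g' t) :
    ∀ t, 0 ≤ t → f t ≤ g t := by
  intro t ht
  have hmono : MonotoneOn (fun s => g s - f s) (Set.Icc 0 t) := by
    apply monotoneOn_of_deriv_nonneg (convex_Icc 0 t)
    · exact (continuous_iff_continuousAt.mpr fun s =>
        ((hg s).sub (hf s)).continuousAt).continuousOn
    · intro s _
      exact ((hg s).sub (hf s)).differentiableAt.differentiableWithinAt
    · intro s hs
      rw [interior_Icc] at hs
      rw [show deriv (fun s => g s - f s) s = g' s - f' s from ((hg s).sub (hf s)).deriv]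
      exact sub_nonneg.mpr (hle s hs.1.le)
  have h := hmono (Set.left_mem_Icc.mpr ht) (Set.right_mem_Icc.mpr ht) ht
  simp only [] at h
  linarith

/-- Theorem 2 with the Example, r = 2: If `y` is twice continuously
differentiable with `y''(t) ≤ −a` for all `t ≥ 0` and
`y(0) + (max(y'(0), 0))²/(2a) ≤ 0`, then `y(t) ≤ 0` for all `t ≥ 0`. -/
theorem stmt_11 (a : ℝ) (ha : 0 < a) (y : ℝ → ℝ)
    (hy : ContDiff ℝ 2 y)
    (hy'' : ∀ t : ℝ, 0 ≤ t → deriv (deriv y) t ≤ -a)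
    (h0 : y 0 + (max (deriv y 0) 0) ^ 2 / (2 * a) ≤ 0) :
    ∀ t : ℝ, 0 ≤ t → y t ≤ 0 := by
  have hdy : Differentiable ℝ y := hy.differentiable (by norm_num)
  have hdy2 : Differentiable ℝ (deriv y) := by
    have h2 : ContDiff ℝ (1 + 1) y := by exact_mod_cast hy
    exact ((contDiff_succ_iff_deriv.mp h2).2.2).differentiable one_ne_zero
  have step1 : ∀ t, 0 ≤ t → deriv y t ≤ deriv y 0 - a * t := by
    apply comp_le_aux (deriv y) (fun s => deriv y 0 - a * s) (deriv (deriv y)) (fun _ => -a)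
    · exact fun t => (hdy2 t).hasDerivAt
    · intro s
      have := show HasDerivAt (fun s => deriv y 0 - a * s) _ s from (hasDerivAt_const s (deriv y 0)).sub ((hasDerivAt_id s).const_mul a)
      convert this using 1; ring
    · simp
    · exact hy''
  have step2 : ∀ t, 0 ≤ t → y t ≤ y 0 + deriv y 0 * t - a * t ^ 2 / 2 := by
    apply comp_le_aux y (fun s => y 0 + deriv y 0 * s - a * s ^ 2 / 2) (deriv y)
      (fun s => deriv y 0 - a * s)
    · exact fun t => (hdy t).hasDerivAt
    · intro s
      have := show HasDerivAt (fun s => y 0 + deriv y 0 * s - a * s ^ 2 / 2) _ s from (((hasDerivAt_id s).const_mul (deriv y 0)).const_add (y 0)).sub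
        (((hasDerivAt_pow 2 s).const_mul a).div_const 2)
      convert this using 1; simp; ring
    · simp
    · exact step1
  intro t ht
  have h2 := step2 t ht
  have hm : deriv y 0 * t - a * t ^ 2 / 2 ≤ (max (deriv y 0) 0) ^ 2 / (2 * a) := by
    set m := max (deriv y 0) 0 with hmdef
    have hmax : deriv y 0 ≤ m := le_max_left _ _
    have key : deriv y 0 * t - a * t ^ 2 / 2 ≤ m * t - a * t ^ 2 / 2 := by
      nlinarith [mul_nonneg (sub_nonneg.mpr hmax) ht]
    have key2 : m * t - a * t ^ 2 / 2 ≤ m ^ 2 / (2 * a) := by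
      rw [le_div_iff₀ (by positivity : (0:ℝ) < 2 * a)]
      nlinarith [sq_nonneg (a * t - m)]
    linarith
  linarith
end

section
/- Let a > 0 and let y : ℝ → ℝ be twice continuously differentiable with y''(t) ≤ −a for all t ≥ 0. Then the function t ↦ y(t) + (max(y'(t), 0))²/(2a) is nonincreasing on [0, ∞). -/
/-- The function `x ↦ max x 0 ^ 2` is differentiable with derivative `2 * max x 0`. -/
lemma hasDerivAt_sq_max (x : ℝ) :
    HasDerivAt (fun x : ℝ => max x 0 ^ 2) (2 * max x 0) x := by
  rcases lt_trichotomy x 0 with hx | hx | hx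
  · have h : HasDerivAt (fun _ : ℝ => (0 : ℝ)) (2 * max x 0) x := by
      simp only [max_eq_right hx.le, mul_zero]; exact hasDerivAt_const x (0 : ℝ)
    refine h.congr_of_eventuallyEq ?_
    filter_upwards [Iio_mem_nhds hx] with z hz
    exact by simp [max_eq_right (le_of_lt (Set.mem_Iio.mp hz))]
  · subst hx
    rw [hasDerivAt_iff_isLittleO]
    simp only [max_self, ne_eq, OfNat.ofNat_ne_zero, not_false_eq_true, zero_pow, sub_zero,
      smul_eq_mul, mul_zero]
    rw [Asymptotics.isLittleO_iff]
    intro c hc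
    rw [Metric.eventually_nhds_iff]
    refine ⟨c, hc, fun z hz => ?_⟩
    simp only [Real.dist_eq, sub_zero] at hz
    have h1 : |max z 0 ^ 2| = max z 0 ^ 2 := abs_of_nonneg (sq_nonneg _)
    rw [Real.norm_eq_abs, Real.norm_eq_abs, h1]
    have h2 : max z 0 ≤ |z| := by
      rcases le_or_gt z 0 with h | h
      · simp only [max_eq_right h]; exact abs_nonneg z
      · simp [max_eq_left h.le, abs_of_pos h]
    calc max z 0 ^ 2 ≤ |z| * |z| := by
          rw [sq]; exact mul_le_mul h2 h2 (le_max_right z 0) (abs_nonneg z)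
      _ ≤ c * |z| := by
          exact mul_le_mul_of_nonneg_right hz.le (abs_nonneg z)
  · have h : HasDerivAt (fun z : ℝ => z ^ 2) (2 * max x 0) x := by
      simpa [max_eq_left hx.le, mul_comm] using (hasDerivAt_pow 2 x)
    refine h.congr_of_eventuallyEq ?_
    filter_upwards [Ioi_mem_nhds hx] with z hz
    exact by simp [max_eq_left (le_of_lt (Set.mem_Ioi.mp hz))]

/-- forward-invariance content of Theorem 2, r = 2: If `y` is twice
continuously differentiable with `y''(t) ≤ −a` for all `t ≥ 0`, then
`t ↦ y(t) + (max(y'(t), 0))²/(2a)` is nonincreasing on `[0, ∞)`. -/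
theorem stmt_12 (a : ℝ) (ha : 0 < a) (y : ℝ → ℝ)
    (hy : ContDiff ℝ 2 y)
    (hy'' : ∀ t : ℝ, 0 ≤ t → deriv (deriv y) t ≤ -a) :
    AntitoneOn (fun t : ℝ => y t + (max (deriv y t) 0) ^ 2 / (2 * a))
      (Set.Ici (0 : ℝ)) := by
  have hy1 : ContDiff ℝ 1 (deriv y) := by
    have := (contDiff_succ_iff_deriv (n := 1)).mp (by exact_mod_cast hy)
    exact this.2.2
  have hdy : ∀ t : ℝ, HasDerivAt y (deriv y t) t := fun t =>
    ((hy.differentiable (by norm_num)) t).hasDerivAt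
  have hdy' : ∀ t : ℝ, HasDerivAt (deriv y) (deriv (deriv y) t) t := fun t =>
    ((hy1.differentiable (by norm_num)) t).hasDerivAt
  have hH : ∀ t : ℝ, HasDerivAt (fun t : ℝ => y t + (max (deriv y t) 0) ^ 2 / (2 * a))
      (deriv y t + 2 * max (deriv y t) 0 * deriv (deriv y) t / (2 * a)) t := by
    intro t
    have h1 : HasDerivAt (fun t : ℝ => (max (deriv y t) 0) ^ 2)
        (2 * max (deriv y t) 0 * deriv (deriv y) t) t :=
      (hasDerivAt_sq_max (deriv y t)).comp t (hdy' t)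
    exact (hdy t).add (h1.div_const (2 * a))
  apply antitoneOn_of_deriv_nonpos (convex_Ici 0)
  · refine Continuous.continuousOn (Continuous.add ?_ ?_)
    · exact (hy.differentiable (by norm_num)).continuous
    · refine Continuous.div_const ?_ _
      exact ((continuous_id.max continuous_const).comp hy1.continuous).pow 2
  · intro t _
    exact ((hH t).differentiableAt).differentiableWithinAt
  · intro t ht
    rw [interior_Ici] at ht
    rw [(hH t).deriv]
    have hmax : (0 : ℝ) ≤ max (deriv y t) 0 := le_max_right _ _
    have hbound : 2 * max (deriv y t) 0 * deriv (deriv y) t ≤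
        2 * max (deriv y t) 0 * (-a) :=
      mul_le_mul_of_nonneg_left (hy'' t ht.le) (by linarith)
    have h2a : (0 : ℝ) < 2 * a := by linarith
    have hdiv : 2 * max (deriv y t) 0 * deriv (deriv y) t / (2 * a) ≤
        2 * max (deriv y t) 0 * (-a) / (2 * a) :=
      by gcongr
    have heq : 2 * max (deriv y t) 0 * (-a) / (2 * a) = -(max (deriv y t) 0) := by
      field_simp
    rw [heq] at hdiv
    have hle : deriv y t ≤ max (deriv y t) 0 := le_max_left _ _
    linarith
end
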